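/- Let (X,r) be a finite left non-degenerate idempotent solution. The structure semigroup S(X,r) is cancellative if and only if |Λ| = 1, where Λ = Im(q) and q(x) = λ_x^{-1}(x). -/

import Mathlib

open Function

variable {X : Type*}

def lam (r : X × X → X × X) (x y : X) : X := (r (x, y)).1

def rho (r : X × X → X × X) (y x : X) : X := (r (x, y)).2

/-- `r × id` acting on triples. -/
def rl (r : X × X → X × X) : X × X × X → X × X × X :=
  fun p => ((r (p.1, p.2.1)).1, (r (p.1, p.2.1)).2, p.2.2)

/-- `id × r` acting on triples. -/
def rr (r : X × X → X × X) : X × X × X → X × X × X :=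
  fun p => (p.1, r (p.2.1, p.2.2))

/-- the Yang–Baxter (braid) equation for a set-theoretic map. -/
def YB (r : X × X → X × X) : Prop :=
  rl r ∘ rr r ∘ rl r = rr r ∘ rl r ∘ rr r

/-- the relation `x + y = y + y` on the free monoid. -/
def simpleRel (X : Type*) : FreeMonoid X → FreeMonoid X → Prop :=
  fun a b => ∃ x y : X, a = FreeMonoid.of x * FreeMonoid.of y ∧
    b = FreeMonoid.of y * FreeMonoid.of y

/-- the derived structure monoid `A(X,r)` of a left non-degenerate idempotent solution. -/
abbrev DerMon (X : Type*) := (conGen (simpleRel X)).Quotient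

def dof (x : X) : DerMon X := (conGen (simpleRel X)).mk' (FreeMonoid.of x)

/-- the diagonal map `q(x) = λ_x⁻¹(x)`. -/
def qmap (L : DerMon X → Equiv.Perm X) (x : X) : X := (L (dof x))⁻¹ x

/-- the product of the structure semigroup realised on pairs `(a, λ_a)`. -/
def sop (L : DerMon X → Equiv.Perm X) (act : Equiv.Perm X → DerMon X →* DerMon X)
    (a b : DerMon X) : DerMon X := a * act (L a) b

/-- the component `S_u = {(a,λ_a) : λ_a⁻¹(a) = |a|·u}`. -/
def Su (L : DerMon X → Equiv.Perm X) (act : Equiv.Perm X → DerMon X →* DerMon X)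
    (len : DerMon X → ℕ) (u : X) : Set (DerMon X) :=
  {a | a ≠ 1 ∧ act (L a)⁻¹ a = dof u ^ len a}

/-- `X_u = {x ∈ X : λ_{dx}(u) = x}`. -/
def Xu (L : DerMon X → Equiv.Perm X) (d : ℕ) (u : X) : Set X :=
  {x | L (dof x ^ d) u = x}


/-! ### Auxiliary lemmas -/

section Aux

variable {X : Type*}

/-- last-letter monoid -/
def LastM (X : Type*) := Option X

def LastM.some (x : X) : LastM X := Option.some x

instance : Monoid (LastM X) where
  one := (none : Option X)
  mul a b := (b : Option X).elim a Option.some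
  mul_assoc a b c := by cases (c : Option X) <;> cases (b : Option X) <;> rfl
  one_mul a := by cases (a : Option X) <;> rfl
  mul_one a := rfl

lemma LastM.some_ne_one (x : X) : LastM.some x ≠ 1 := by
  intro h; exact Option.some_ne_none x h

lemma LastM.mul_some (a : LastM X) (x : X) : a * LastM.some x = LastM.some x := rfl

def lastF : DerMon X →* LastM X :=
  Con.lift _ (FreeMonoid.lift (fun x => LastM.some x)) (Con.conGen_le.mpr (by
    rintro a b ⟨x, y, rfl, rfl⟩
    simp only [Con.ker_rel, map_mul, FreeMonoid.lift_eval_of]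
    rw [LastM.mul_some, LastM.mul_some]))

lemma lastF_dof (x : X) : lastF (dof x) = LastM.some x := by
  simp [lastF, dof, Con.lift_mk']

lemma dof_mul_dof (x y : X) : dof x * dof y = dof y * dof y := by
  simp only [dof, ← map_mul]
  exact (Con.eq _).mpr (ConGen.Rel.of _ _ ⟨x, y, rfl, rfl⟩)

lemma lastF_dof_pow (x : X) (n : ℕ) (hn : 1 ≤ n) : lastF (dof x ^ n) = LastM.some x := by
  induction n with
  | zero => omega
  | succ m ih =>
    rcases Nat.eq_or_lt_of_le hn with h | h
    · rw [← h]; simpa using lastF_dof x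
    · rw [pow_succ, map_mul, lastF_dof, LastM.mul_some]

lemma dof_pow_ne_one (x : X) (n : ℕ) (hn : 1 ≤ n) : dof x ^ n ≠ 1 := by
  intro h
  have := lastF_dof_pow x n hn
  rw [h, map_one] at this
  exact LastM.some_ne_one x this.symm

lemma dof_pow_inj {x y : X} {n m : ℕ} (hn : 1 ≤ n) (hm : 1 ≤ m)
    (h : dof x ^ n = dof y ^ m) : x = y := by
  have h1 := lastF_dof_pow x n hn
  rw [h, lastF_dof_pow y m hm] at h1
  exact Option.some_inj.mp h1.symm

lemma dof_mul_pow (x z : X) (m : ℕ) (hm : 1 ≤ m) :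
    dof x * dof z ^ m = dof z ^ (1 + m) := by
  induction m with
  | zero => omega
  | succ k ih =>
    rcases Nat.eq_or_lt_of_le hm with h | h
    · rw [← h]
      simpa [pow_succ, pow_one] using dof_mul_dof x z
    · have hk : 1 ≤ k := by omega
      calc dof x * dof z ^ (k+1) = (dof x * dof z ^ k) * dof z := by
            rw [pow_succ, mul_assoc]
        _ = dof z ^ (1+k) * dof z := by rw [ih hk]
        _ = dof z ^ (1 + (k+1)) := by rw [← pow_succ]; ring_nf

lemma pow_mul_pow (x z : X) (n m : ℕ) (hn : 1 ≤ n) (hm : 1 ≤ m) :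
    dof x ^ n * dof z ^ m = dof z ^ (n + m) := by
  induction n with
  | zero => omega
  | succ k ih =>
    rcases Nat.eq_or_lt_of_le hn with h | h
    · rw [← h, pow_one, dof_mul_pow x z m hm]
    · have hk : 1 ≤ k := by omega
      rw [pow_succ', mul_assoc, ih hk, dof_mul_pow x z (k+m) (by omega)]
      ring_nf

lemma repr_aux (len : DerMon X → ℕ)
    (hlenmul : ∀ a b : DerMon X, len (a * b) = len a + len b)
    (hlenof : ∀ x : X, len (dof x) = 1)
    (a : DerMon X) (ha : a ≠ 1) : ∃ z, 1 ≤ len a ∧ a = dof z ^ len a := by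
  have hlen1 : len 1 = 0 := by
    have := hlenmul 1 1
    simp at this
    omega
  obtain ⟨w, rfl⟩ := Con.mk'_surjective a
  induction w using FreeMonoid.inductionOn' with
  | one => exact absurd (map_one _) ha
  | of_mul x w ihw =>
    rw [map_mul] at ha ⊢
    have hdx : (conGen (simpleRel X)).mk' (FreeMonoid.of x) = dof x := rfl
    rw [hdx] at ha ⊢
    by_cases hw : (conGen (simpleRel X)).mk' w = 1
    · refine ⟨x, ?_, ?_⟩
      · rw [hw, mul_one, hlenof]
      · rw [hw, mul_one, hlenof, pow_one]
    · obtain ⟨z, hz1, hz2⟩ := ihw hw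
      refine ⟨z, ?_, ?_⟩
      · rw [hlenmul]; omega
      · rw [hlenmul, hz2, dof_mul_pow x z _ hz1, hlenof, ← hz2]

lemma len_pow (len : DerMon X → ℕ)
    (hlenmul : ∀ a b : DerMon X, len (a * b) = len a + len b)
    (hlenof : ∀ x : X, len (dof x) = 1)
    (z : X) (n : ℕ) : len (dof z ^ n) = n := by
  have hlen1 : len 1 = 0 := by
    have := hlenmul 1 1
    simp at this
    omega
  induction n with
  | zero => simpa using hlen1
  | succ k ih => rw [pow_succ, hlenmul, ih, hlenof]

/-- first component of the Yang-Baxter equation -/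
lemma yb_lam {r : X × X → X × X} (hYB : YB r) (x y z : X) :
    lam r (lam r x y) (lam r (rho r y x) z) = lam r x (lam r y z) := by
  have h := congrFun hYB (x, y, z)
  have h1 := congrArg Prod.fst h
  simpa [rl, rr, lam, rho] using h1

/-- first component of idempotency -/
lemma idem_lam {r : X × X → X × X} (hidem : r ∘ r = r) (x y : X) :
    lam r (lam r x y) (rho r y x) = lam r x y := by
  have h := congrFun hidem (x, y)
  have h1 := congrArg Prod.fst h
  simpa [lam, rho] using h1

end Aux

/-- The structure semigroup `S(X,r)` is cancellative iff `|Λ| = 1`. -/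
theorem statement9
    {X : Type*} [Fintype X] (r : X × X → X × X) (hYB : YB r) (hidem : r ∘ r = r)
    (L : DerMon X → Equiv.Perm X)
    (hLx : ∀ x y : X, L (dof x) y = lam r x y)
    (hL1 : L 1 = 1)
    (act : Equiv.Perm X → DerMon X →* DerMon X)
    (hact : ∀ (f : Equiv.Perm X) (x : X), act f (dof x) = dof (f x))
    (hact1 : ∀ a : DerMon X, act 1 a = a)
    (hactmul : ∀ (f g : Equiv.Perm X) (a : DerMon X), act (f * g) a = act f (act g a))
    (len : DerMon X → ℕ)
    (hlenmul : ∀ a b : DerMon X, len (a * b) = len a + len b)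
    (hlenof : ∀ x : X, len (dof x) = 1)
    (hcoc : ∀ a b : DerMon X, L (a * act (L a) b) = L a * L b)
    [Nonempty X] :
    (∀ a b c : DerMon X, a ≠ 1 → b ≠ 1 → c ≠ 1 →
      ((sop L act a c = sop L act b c → a = b) ∧
       (sop L act c a = sop L act c b → a = b))) ↔
    ∃ u : X, Set.range (qmap L) = {u} := by
  -- notation shortcuts
  set q : X → X := qmap L with hqdef
  have hq_apply : ∀ x : X, L (dof x) (q x) = x := by
    intro x
    simp [hqdef, qmap]
  have dof_ne : ∀ x : X, dof x ≠ 1 := fun x => by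
    simpa using dof_pow_ne_one x 1 le_rfl
  -- translate yb and idem
  have hyb : ∀ x y z : X, L (dof (L (dof x) y)) (L (dof (rho r y x)) z)
      = L (dof x) (L (dof y) z) := by
    intro x y z
    have := yb_lam hYB x y z
    simpa [hLx] using this
  have hid : ∀ x y : X, L (dof (L (dof x) y)) (rho r y x) = L (dof x) y := by
    intro x y
    have := idem_lam hidem x y
    simpa [hLx] using this
  have hrho : ∀ x y : X, rho r y x = q (L (dof x) y) := by
    intro x y
    have h := hid x y
    have : (L (dof (L (dof x) y)))⁻¹ (L (dof (L (dof x) y)) (rho r y x))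
        = (L (dof (L (dof x) y)))⁻¹ (L (dof x) y) := by rw [h]
    simpa [hqdef, qmap] using this
  have hybq : ∀ x y z : X, L (dof (L (dof x) y)) (L (dof (q (L (dof x) y))) z)
      = L (dof x) (L (dof y) z) := by
    intro x y z
    rw [← hrho x y]
    exact hyb x y z
  constructor
  · -- cancellative → q constant
    intro hcanc
    -- injectivity of x ↦ λ_x y
    have step1 : ∀ y x x' : X, L (dof x) y = L (dof x') y → x = x' := by
      intro y x x' h
      have hc := (hcanc (dof x) (dof x') (dof y) (dof_ne x) (dof_ne x') (dof_ne y)).1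
      have hsop : sop L act (dof x) (dof y) = sop L act (dof x') (dof y) := by
        rw [sop, sop, hact, hact, h]
        exact (dof_mul_dof x _).trans (dof_mul_dof x' _).symm
      have := hc hsop
      exact dof_pow_inj (x := x) (y := x') (n := 1) (m := 1) le_rfl le_rfl (by simpa using this)
    have step2 : ∀ y : X, Function.Surjective (fun x => L (dof x) y) := by
      intro y
      exact Finite.injective_iff_surjective.mp (fun a b => step1 y a b)
    -- key identity : q y = q (q s) for all y s
    have step3 : ∀ y s : X, q y = q (q s) := by
      intro y s
      obtain ⟨x, hx⟩ := step2 y s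
      have h1 := hybq x y (q y)
      rw [hq_apply y] at h1
      simp only at hx
      rw [hx] at h1
      -- h1 : L (dof s) (L (dof (q s)) (q y)) = L (dof x) y = s
      have h2 : L (dof s) (L (dof (q s)) (q y)) = L (dof s) (q s) := by
        rw [h1, hq_apply s]
      have h3 : L (dof (q s)) (q y) = q s := (L (dof s)).injective h2
      have h4 : (L (dof (q s)))⁻¹ (L (dof (q s)) (q y)) = (L (dof (q s)))⁻¹ (q s) := by
        rw [h3]
      simpa [hqdef, qmap] using h4
    obtain ⟨x0⟩ := ‹Nonempty X›
    refine ⟨q (q x0), ?_⟩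
    apply Set.eq_singleton_iff_unique_mem.mpr
    constructor
    · exact ⟨q x0, rfl⟩
    · rintro v ⟨y, rfl⟩
      exact step3 y x0
  · -- q constant → cancellative
    rintro ⟨u, hu⟩
    have hq : ∀ x : X, q x = u := by
      intro x
      have : q x ∈ Set.range q := ⟨x, rfl⟩
      rw [hu] at this
      exact this
    have lam_u : ∀ x : X, L (dof x) u = x := by
      intro x
      rw [← hq x]
      exact hq_apply x
    have lam_u_pow : ∀ k : ℕ, ((L (dof u)) ^ k) u = u := by
      intro k
      induction k with
      | zero => rfl
      | succ m ih => rw [pow_succ, Equiv.Perm.mul_apply, lam_u u, ih]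
    -- key: λ_x λ_y = λ_{λ_x y} λ_u
    have star : ∀ x y z : X, L (dof x) (L (dof y) z)
        = L (dof (L (dof x) y)) (L (dof u) z) := by
      intro x y z
      rw [← hybq x y z, hq]
    -- injectivity of x ↦ λ_x w for any w
    have injA : ∀ w x x' : X, L (dof x) w = L (dof x') w → x = x' := by
      intro w x x' h
      have hfun : ∀ z : X, L (dof x) z = L (dof x') z := by
        intro z
        have hz : L (dof w) ((L (dof w))⁻¹ z) = z := by simp
        calc L (dof x) z = L (dof x) (L (dof w) ((L (dof w))⁻¹ z)) := by rw [hz]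
          _ = L (dof (L (dof x) w)) (L (dof u) ((L (dof w))⁻¹ z)) := star x w _
          _ = L (dof (L (dof x') w)) (L (dof u) ((L (dof w))⁻¹ z)) := by rw [h]
          _ = L (dof x') (L (dof w) ((L (dof w))⁻¹ z)) := (star x' w _).symm
          _ = L (dof x') z := by rw [hz]
      calc x = L (dof x) u := (lam_u x).symm
        _ = L (dof x') u := hfun u
        _ = x' := lam_u x'
    -- structure of L on powers
    have powL : ∀ (z : X) (n : ℕ), 1 ≤ n →
        L (dof z ^ n) = L (dof z) * (L (dof u)) ^ (n - 1) := by
      intro z n hn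
      induction n with
      | zero => omega
      | succ k ih =>
        rcases Nat.eq_or_lt_of_le hn with h | h
        · rw [← h]; simp
        · have hk : 1 ≤ k := by omega
          have ihk := ih hk
          have hLu : L (dof z ^ k) u = z := by
            rw [ihk, Equiv.Perm.mul_apply, lam_u_pow, lam_u]
          have hc := hcoc (dof z ^ k) (dof u)
          rw [hact, hLu] at hc
          have hmul : dof z ^ k * dof z = dof z ^ (k + 1) := by rw [← pow_succ]
          rw [hmul] at hc
          rw [hc, ihk, mul_assoc, ← pow_succ]
          congr 2
          omega
    -- now prove cancellativity
    intro a b c ha hb hc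
    obtain ⟨x, hn1, hax⟩ := repr_aux len hlenmul hlenof a ha
    obtain ⟨x', hn1', hbx⟩ := repr_aux len hlenmul hlenof b hb
    obtain ⟨y, hm1, hcy⟩ := repr_aux len hlenmul hlenof c hc
    set n := len a
    set n' := len b
    set m := len c
    have hsop : ∀ (d : DerMon X) (w : X) (k : ℕ), 1 ≤ k → d = dof w ^ k →
        ∀ (e : X) (j : ℕ), 1 ≤ j →
        sop L act d (dof e ^ j) = dof (L d e) ^ (k + j) := by
      intro d w k hk hd e j hj
      subst hd
      rw [sop, map_pow, hact, pow_mul_pow w _ k j hk hj]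
    constructor
    · intro h
      rw [hcy, hsop a x n hn1 hax y m hm1, hsop b x' n' hn1' hbx y m hm1] at h
      have hlen : n + m = n' + m := by
        have := congrArg len h
        rwa [len_pow len hlenmul hlenof, len_pow len hlenmul hlenof] at this
      have hnn : n = n' := by omega
      have heq : L a y = L b y := dof_pow_inj (by omega) (by omega) h
      rw [hax, hbx, powL x n hn1, powL x' n' hn1', ← hnn] at heq
      simp only [Equiv.Perm.mul_apply] at heq
      have : x = x' := injA _ _ _ heq
      rw [hax, hbx, this, hnn]
    · intro h
      rw [hax, hbx] at h
      rw [hsop c y m hm1 hcy x n hn1, hsop c y m hm1 hcy x' n' hn1'] at h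
      have hlen : m + n = m + n' := by
        have := congrArg len h
        rwa [len_pow len hlenmul hlenof, len_pow len hlenmul hlenof] at this
      have hnn : n = n' := by omega
      have heq : L c x = L c x' := dof_pow_inj (by omega) (by omega) h
      have : x = x' := (L c).injective heq
      rw [hax, hbx, this, hnn]
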